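/- arXiv:1510.03722 — 6 statements merged into one kernel-verified Lean document; each statement's English description precedes it below -/
import Mathlib

section
/- Let p > 1 and ε ∈ (0,1). Assume ‖h‖^{2p} is integrable with ∫_M ‖h‖^{2p} dμ > 0, that ∫_M t dμ > 0, and that the hypotheses (HM), (R) and the pinching condition (Λ_{p,ε}) hold. Then (1−ε)² · (∫_M t dμ)/(λ V) ≤ ‖X‖₂² ≤ (∫_M t dμ)/(λ V), where ‖X‖₂² = (1/V) ∫_M ‖X‖² dμ. (This is estimate (4.3) of Lemma 4.1 of the paper, giving two-sided control of the L² norm of the position vector under the eigenvalue pinching.) -/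
open MeasureTheory

/-- Estimate (4.3) of Lemma 4.1: under the pinching condition `(Λ_{p,ε})`,
`(1−ε)² (∫ t)/(λV) ≤ ‖X‖₂² ≤ (∫ t)/(λV)`. -/
theorem L2_estimate_X_via_t
    {M : Type*} [MeasurableSpace M] {E : Type*}
    [NormedAddCommGroup E] [InnerProductSpace ℝ E]
    (μ : Measure M) [IsFiniteMeasure μ] (hμ : μ Set.univ ≠ 0)
    (X h : M → E) (s t : M → ℝ) (lam p ε : ℝ)
    (hlam : 0 < lam) (hp : 1 < p) (hε0 : 0 < ε) (hε1 : ε < 1)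
    (hX : AEStronglyMeasurable X μ) (hh : AEStronglyMeasurable h μ)
    (hX2 : Integrable (fun x => ‖X x‖ ^ 2) μ)
    (hh2 : Integrable (fun x => ‖h x‖ ^ 2) μ)
    (hh2p : Integrable (fun x => ‖h x‖ ^ (2 * p)) μ)
    (hh2ppos : 0 < ∫ x, ‖h x‖ ^ (2 * p) ∂μ)
    (htpos : 0 < ∫ x, t x ∂μ)
    (hs : Integrable s μ) (ht : Integrable t μ)
    (V : ℝ) (hV : V = (μ Set.univ).toReal)
    (Np : ℝ) (hNp : Np = ((1 / V) * ∫ x, ‖h x‖ ^ (2 * p) ∂μ) ^ (1 / p))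
    (HM : ∫ x, (inner ℝ (X x) (h x) : ℝ) ∂μ = - ∫ x, s x ∂μ)
    (hR : lam * ∫ x, ‖X x‖ ^ 2 ∂μ ≤ ∫ x, t x ∂μ)
    (pinch : lam * (∫ x, s x ∂μ) ^ 2 ≥ (1 - ε) * (∫ x, t x ∂μ) * Np * V) :
    (1 - ε) ^ 2 * ((∫ x, t x ∂μ) / (lam * V)) ≤ (1 / V) * ∫ x, ‖X x‖ ^ 2 ∂μ ∧
      (1 / V) * ∫ x, ‖X x‖ ^ 2 ∂μ ≤ (∫ x, t x ∂μ) / (lam * V) := by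
  have hV0 : 0 < V := hV ▸ ENNReal.toReal_pos hμ (measure_ne_top μ _)
  have hp0 : (0:ℝ) < p := lt_trans one_pos hp
  set I2 : ℝ := ∫ x, ‖X x‖ ^ 2 ∂μ with hI2
  set Ih2 : ℝ := ∫ x, ‖h x‖ ^ 2 ∂μ with hIh2
  set Ihp : ℝ := ∫ x, ‖h x‖ ^ (2 * p) ∂μ with hIhp
  set S : ℝ := ∫ x, s x ∂μ with hS
  set T : ℝ := ∫ x, t x ∂μ with hT
  have hI2nn : 0 ≤ I2 := integral_nonneg fun x => by positivity
  have hIh2nn : 0 ≤ Ih2 := integral_nonneg fun x => by positivity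
  have hrp2 : ∀ a : ℝ, a ^ (2:ℝ) = a ^ (2:ℕ) := fun a => by
    rw [show (2:ℝ) = ((2:ℕ):ℝ) from by norm_num, Real.rpow_natCast]
  -- MemLp facts
  have h2eq : ENNReal.ofReal (2:ℝ) = 2 := by simp
  have hXL2 : MemLp X (ENNReal.ofReal (2:ℝ)) μ := by
    rw [h2eq]; exact (memLp_two_iff_integrable_sq_norm hX).2 hX2
  have hhL2 : MemLp h (ENNReal.ofReal (2:ℝ)) μ := by
    rw [h2eq]; exact (memLp_two_iff_integrable_sq_norm hh).2 hh2
  -- Cauchy-Schwarz : S^2 ≤ I2 * Ih2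
  have h22 : (2:ℝ).HolderConjugate 2 := by
    rw [Real.holderConjugate_iff]
    constructor
    · norm_num
    · norm_num
  have hCS := integral_mul_norm_le_Lp_mul_Lq (μ := μ) h22 hXL2 hhL2
  have hrw2 : ∀ g : M → E, (∫ x, ‖g x‖ ^ (2:ℝ) ∂μ) = ∫ x, ‖g x‖ ^ (2:ℕ) ∂μ := by
    intro g
    refine integral_congr_ae (Filter.Eventually.of_forall fun x => ?_)
    exact hrp2 _
  rw [hrw2 X, hrw2 h] at hCS
  have hXhint : Integrable (fun x => ‖X x‖ * ‖h x‖) μ := by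
    refine Integrable.mono' (hX2.add hh2) (hX.norm.mul hh.norm)
      (Filter.Eventually.of_forall fun x => ?_)
    have h1 : (0:ℝ) ≤ ‖X x‖ * ‖h x‖ := by positivity
    rw [Real.norm_of_nonneg h1]
    simp only [Pi.add_apply]
    nlinarith [sq_nonneg (‖X x‖ - ‖h x‖), norm_nonneg (X x), norm_nonneg (h x)]
  have habs : |∫ x, (inner ℝ (X x) (h x) : ℝ) ∂μ| ≤ ∫ x, ‖X x‖ * ‖h x‖ ∂μ := by
    calc |∫ x, (inner ℝ (X x) (h x) : ℝ) ∂μ| ≤ ∫ x, ‖(inner ℝ (X x) (h x) : ℝ)‖ ∂μ := by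
          rw [← Real.norm_eq_abs]; exact norm_integral_le_integral_norm _
      _ ≤ ∫ x, ‖X x‖ * ‖h x‖ ∂μ := by
          refine integral_mono_of_nonneg (Filter.Eventually.of_forall fun x => norm_nonneg _)
            hXhint (Filter.Eventually.of_forall fun x => norm_inner_le_norm _ _)
  have hCS2 : S ^ 2 ≤ I2 * Ih2 := by
    have hSabs : |S| ≤ ∫ x, ‖X x‖ * ‖h x‖ ∂μ := by
      rw [HM] at habs; rwa [abs_neg] at habs
    have h1 : S ^ 2 = |S| ^ 2 := (sq_abs S).symm
    rw [h1]
    calc |S| ^ 2 ≤ (I2 ^ (1/(2:ℝ)) * Ih2 ^ (1/(2:ℝ))) ^ 2 := by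
          have h0 : (0:ℝ) ≤ |S| := abs_nonneg _
          exact pow_le_pow_left₀ h0 (le_trans hSabs hCS) 2
      _ = (I2 ^ (1/(2:ℝ))) ^ 2 * (Ih2 ^ (1/(2:ℝ))) ^ 2 := by ring
      _ = I2 * Ih2 := by
          rw [← Real.rpow_natCast (I2 ^ (1/(2:ℝ))) 2, ← Real.rpow_natCast (Ih2 ^ (1/(2:ℝ))) 2,
            ← Real.rpow_mul hI2nn, ← Real.rpow_mul hIh2nn]
          norm_num
  -- Hölder : Ih2 ≤ Np * V
  have hpq : p.HolderConjugate (p / (p - 1)) := Real.HolderConjugate.conjExponent hp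
  have hq1 : 1 / (p / (p - 1)) = 1 - 1/p := by
    rw [one_div, ← hpq.one_sub_inv, one_div]
  have hhL2p : MemLp (fun x => ‖h x‖ ^ (2:ℝ)) (ENNReal.ofReal p) μ := by
    have h2p : MemLp h (ENNReal.ofReal (2 * p)) μ := by
      have h2ptop : ENNReal.ofReal (2 * p) ≠ ⊤ := ENNReal.ofReal_ne_top
      have h2p0 : ENNReal.ofReal (2 * p) ≠ 0 := by
        simp only [Ne, ENNReal.ofReal_eq_zero, not_le]; positivity
      have hiff := (memLp_norm_rpow_iff (q := ENNReal.ofReal (2 * p))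
        (p := ENNReal.ofReal (2 * p)) hh h2p0 h2ptop)
      rw [ENNReal.div_self h2p0 h2ptop] at hiff
      refine hiff.1 ?_
      rw [memLp_one_iff_integrable]
      have htr : (ENNReal.ofReal (2 * p)).toReal = 2 * p :=
        ENNReal.toReal_ofReal (by positivity)
      simpa only [htr] using hh2p
    have h20 : (ENNReal.ofReal (2:ℝ)) ≠ 0 := by simp
    have h2top : (ENNReal.ofReal (2:ℝ)) ≠ ⊤ := ENNReal.ofReal_ne_top
    have hmem := (memLp_norm_rpow_iff (q := ENNReal.ofReal (2:ℝ))
      (p := ENNReal.ofReal (2 * p)) hh h20 h2top).2 h2p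
    have hdiv : ENNReal.ofReal (2 * p) / ENNReal.ofReal (2:ℝ) = ENNReal.ofReal p := by
      rw [← ENNReal.ofReal_div_of_pos (by norm_num)]
      norm_num
    rw [hdiv] at hmem
    have htr2 : (ENNReal.ofReal (2:ℝ)).toReal = (2:ℝ) := ENNReal.toReal_ofReal (by norm_num)
    simpa [htr2] using hmem
  have hone : MemLp (fun _ : M => (1:ℝ)) (ENNReal.ofReal (p / (p - 1))) μ := memLp_const 1
  have hHold0 := integral_mul_le_Lp_mul_Lq_of_nonneg (μ := μ) hpq
    (Filter.Eventually.of_forall fun x => by positivity)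
    (Filter.Eventually.of_forall fun x => zero_le_one) hhL2p hone
  have hHold : Ih2 ≤ Ihp ^ (1/p) * V ^ (1 - 1/p) := by
    have e1 : (∫ x, ‖h x‖ ^ (2:ℝ) * 1 ∂μ) = Ih2 := by
      simp only [mul_one]; exact hrw2 h
    have e2 : (∫ x, (‖h x‖ ^ (2:ℝ)) ^ p ∂μ) = Ihp := by
      refine integral_congr_ae (Filter.Eventually.of_forall fun x => ?_)
      show (‖h x‖ ^ (2:ℝ)) ^ p = ‖h x‖ ^ (2 * p)
      rw [← Real.rpow_mul (norm_nonneg _)]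
    have e3 : (∫ x, (1:ℝ) ^ (p / (p - 1)) ∂μ) = V := by
      simp [hV, Real.one_rpow, Measure.real_def]
    simp only [e1, e2, e3, hq1] at hHold0
    exact hHold0
  have hNpV : Np * V = Ihp ^ (1/p) * V ^ (1 - 1/p) := by
    have hv1 : V ^ (1 - 1/p) = V * (V ^ (1/p))⁻¹ := by
      rw [Real.rpow_sub hV0, Real.rpow_one, div_eq_mul_inv]
    have hm : ((1/V) * Ihp) ^ (1/p) = (V ^ (1/p))⁻¹ * Ihp ^ (1/p) := by
      rw [Real.mul_rpow (by positivity) hh2ppos.le, one_div, Real.inv_rpow hV0.le]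
    rw [hNp, hm, hv1]
    ring
  have hIh2le : Ih2 ≤ Np * V := by rw [hNpV]; exact hHold
  have hNpVpos : 0 < Np * V := by
    rw [hNpV]
    have h1 : 0 < Ihp ^ (1/p) := Real.rpow_pos_of_pos hh2ppos _
    have h2 : 0 < V ^ (1 - 1/p) := Real.rpow_pos_of_pos hV0 _
    positivity
  -- main lower bound : (1-ε) * T ≤ lam * I2
  have hlv : (0:ℝ) < lam * V := by positivity
  have hmain : (1 - ε) * T ≤ lam * I2 := by
    have h1 : lam * S ^ 2 ≤ lam * I2 * (Np * V) := by
      calc lam * S ^ 2 ≤ lam * (I2 * Ih2) :=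
            mul_le_mul_of_nonneg_left hCS2 hlam.le
        _ ≤ lam * (I2 * (Np * V)) :=
            mul_le_mul_of_nonneg_left (mul_le_mul_of_nonneg_left hIh2le hI2nn) hlam.le
        _ = lam * I2 * (Np * V) := by ring
    have h2 : (1 - ε) * T * (Np * V) ≤ lam * I2 * (Np * V) := by
      calc (1 - ε) * T * (Np * V) = (1 - ε) * T * Np * V := by ring
        _ ≤ lam * S ^ 2 := pinch
        _ ≤ lam * I2 * (Np * V) := h1
    exact le_of_mul_le_mul_right h2 hNpVpos
  have heq : (1 / V) * I2 * (lam * V) = lam * I2 := by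
    field_simp
  constructor
  · have key : (1 - ε) * T / (lam * V) ≤ (1 / V) * I2 := by
      rw [div_le_iff₀ hlv, heq]
      exact hmain
    have h1 : (1 - ε) ^ 2 * (T / (lam * V)) ≤ (1 - ε) * (T / (lam * V)) := by
      have h2 : (1 - ε) ^ 2 ≤ 1 - ε := by nlinarith
      have hfrac : 0 ≤ T / (lam * V) := by positivity
      exact mul_le_mul_of_nonneg_right h2 hfrac
    calc (1 - ε) ^ 2 * (T / (lam * V)) ≤ (1 - ε) * (T / (lam * V)) := h1
      _ = (1 - ε) * T / (lam * V) := (mul_div_assoc _ _ _).symm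
      _ ≤ (1 / V) * I2 := key
  · rw [le_div_iff₀ hlv, heq]
    exact hR
end

section
/- Let p > 1 and ε ∈ (0,1). Assume ‖h‖^{2p} is integrable with ∫_M ‖h‖^{2p} dμ > 0, that ∫_M t dμ > 0, and that the hypotheses (HM), (R) and the pinching condition (Λ_{p,ε}) hold. Then (1−ε)² · ((1/V) ∫_M s dμ)² / ‖h‖_{2p}² ≤ ‖X‖₂² ≤ (1/(1−ε)) · ((1/V) ∫_M s dμ)² / ‖h‖_{2p}², where ‖X‖₂² = (1/V) ∫_M ‖X‖² dμ. (This is estimate (4.4) of Lemma 4.1 of the paper: under the pinching, ‖X‖₂ is comparable to the radius r = |(1/V)∫ tr(S)| / ‖H_S‖_{2p}.) -/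
open MeasureTheory

/-! Cauchy–Schwarz and the Hsiung–Minkowski formula give `(∫ s)² ≤ ∫ ‖X‖² · ∫ ‖h‖²`, and by
Jensen's inequality for `x ↦ x ^ p` the normalized `L²` norm of `h` is at most its normalized
`L^{2p}` norm, so `(∫ s)² ≤ ‖h‖_{2p}² V ∫ ‖X‖²`: this is the lower bound. Conversely, the Rayleigh
bound `λ ∫ ‖X‖² ≤ ∫ t` inserted into the pinching condition gives
`(1 - ε) ‖h‖_{2p}² V ∫ ‖X‖² ≤ (∫ s)²`, which is the upper bound. -/

section

variable {α E : Type*} [MeasurableSpace α] [NormedAddCommGroup E] [InnerProductSpace ℝ E]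
  {μ : Measure α}

theorem MeasureTheory.MemLp.inner_toLp_eq_integral {f g : α → E} (hf : MemLp f 2 μ)
    (hg : MemLp g 2 μ) : inner ℝ (hf.toLp f) (hg.toLp g) = ∫ x, inner ℝ (f x) (g x) ∂μ := by
  rw [L2.inner_def]
  refine integral_congr_ae ?_
  filter_upwards [hf.coeFn_toLp, hg.coeFn_toLp] with x hfx hgx
  rw [hfx, hgx]

theorem sq_integral_inner_le_mul {f g : α → E} (hf : MemLp f 2 μ) (hg : MemLp g 2 μ) :
    (∫ x, inner ℝ (f x) (g x) ∂μ) ^ 2 ≤ (∫ x, ‖f x‖ ^ 2 ∂μ) * ∫ x, ‖g x‖ ^ 2 ∂μ := by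
  calc (∫ x, inner ℝ (f x) (g x) ∂μ) ^ 2
      = inner ℝ (hf.toLp f) (hg.toLp g) * inner ℝ (hf.toLp f) (hg.toLp g) := by
        rw [sq, MemLp.inner_toLp_eq_integral]
    _ ≤ inner ℝ (hf.toLp f) (hf.toLp f) * inner ℝ (hg.toLp g) (hg.toLp g) :=
        real_inner_mul_inner_self_le _ _
    _ = (∫ x, ‖f x‖ ^ 2 ∂μ) * ∫ x, ‖g x‖ ^ 2 ∂μ := by
        simp_rw [MemLp.inner_toLp_eq_integral, real_inner_self_eq_norm_sq]

theorem average_le_rpow_average_rpow [IsFiniteMeasure μ] {f : α → ℝ} {p : ℝ} (hp : 1 ≤ p)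
    (hf0 : ∀ᵐ x ∂μ, 0 ≤ f x) (hf : Integrable f μ) (hfp : Integrable (fun x => f x ^ p) μ) :
    ⨍ x, f x ∂μ ≤ (⨍ x, f x ^ p ∂μ) ^ (1 / p) := by
  rcases eq_zero_or_neZero μ with rfl | _
  · simp [Real.rpow_nonneg]
  have hp0 : 0 < p := zero_lt_one.trans_le hp
  have havg0 : 0 ≤ ⨍ x, f x ∂μ := by
    rw [average_eq]
    exact smul_nonneg (by positivity) (integral_nonneg_of_ae hf0)
  have hjensen : (⨍ x, f x ∂μ) ^ p ≤ ⨍ x, f x ^ p ∂μ :=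
    (convexOn_rpow hp).map_average_le (continuousOn_id.rpow_const fun _ _ => Or.inr hp0.le)
      isClosed_Ici hf0 hf hfp
  rwa [one_div, Real.le_rpow_inv_iff_of_pos havg0 ((Real.rpow_nonneg havg0 p).trans hjensen) hp0]

end

theorem L2_estimate_X_via_s_general
    {M : Type*} [MeasurableSpace M] {E : Type*}
    [NormedAddCommGroup E] [InnerProductSpace ℝ E]
    (μ : Measure M) [IsFiniteMeasure μ] (hμ : μ Set.univ ≠ 0)
    (X h : M → E) (s t : M → ℝ) (lam p ε : ℝ)
    (hlam : 0 < lam) (hp : 1 < p) (hε0 : 0 < ε) (hε1 : ε < 1)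
    (hX : AEStronglyMeasurable X μ) (hh : AEStronglyMeasurable h μ)
    (hX2 : Integrable (fun x => ‖X x‖ ^ 2) μ)
    (hh2 : Integrable (fun x => ‖h x‖ ^ 2) μ)
    (hh2p : Integrable (fun x => ‖h x‖ ^ (2 * p)) μ)
    (hh2ppos : 0 < ∫ x, ‖h x‖ ^ (2 * p) ∂μ)
    (V : ℝ) (hV : V = (μ Set.univ).toReal)
    (Np : ℝ) (hNp : Np = ((1 / V) * ∫ x, ‖h x‖ ^ (2 * p) ∂μ) ^ (1 / p))
    (HM : ∫ x, (inner ℝ (X x) (h x) : ℝ) ∂μ = - ∫ x, s x ∂μ)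
    (hR : lam * ∫ x, ‖X x‖ ^ 2 ∂μ ≤ ∫ x, t x ∂μ)
    (pinch : lam * (∫ x, s x ∂μ) ^ 2 ≥ (1 - ε) * (∫ x, t x ∂μ) * Np * V) :
    (1 - ε) ^ 2 * (((1 / V) * ∫ x, s x ∂μ) ^ 2 / Np) ≤ (1 / V) * ∫ x, ‖X x‖ ^ 2 ∂μ ∧
      (1 / V) * ∫ x, ‖X x‖ ^ 2 ∂μ ≤ (1 / (1 - ε)) * (((1 / V) * ∫ x, s x ∂μ) ^ 2 / Np) := by
  have hV0 : 0 < V := hV ▸ ENNReal.toReal_pos hμ (measure_ne_top μ _)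
  have hNp0 : 0 < Np := hNp ▸ Real.rpow_pos_of_pos (by positivity) _
  have hCS : (∫ x, s x ∂μ) ^ 2 ≤ (∫ x, ‖X x‖ ^ 2 ∂μ) * ∫ x, ‖h x‖ ^ 2 ∂μ := by
    simpa only [HM, neg_sq] using sq_integral_inner_le_mul
      ((memLp_two_iff_integrable_sq_norm hX).2 hX2) ((memLp_two_iff_integrable_sq_norm hh).2 hh2)
  have hL2_le_L2p : ∫ x, ‖h x‖ ^ 2 ∂μ ≤ Np * V := by
    have hpow (x : M) : (‖h x‖ ^ 2) ^ p = ‖h x‖ ^ (2 * p) := by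
      rw [← Real.rpow_natCast, ← Real.rpow_mul (norm_nonneg _), Nat.cast_ofNat]
    have := average_le_rpow_average_rpow hp.le (.of_forall fun x => sq_nonneg ‖h x‖) hh2
      (by simpa only [hpow] using hh2p)
    simp only [hpow, average_eq, smul_eq_mul, measureReal_def, ← hV, ← one_div, ← hNp] at this
    rwa [one_div_mul_eq_div, div_le_iff₀ hV0] at this
  set A := ∫ x, ‖X x‖ ^ 2 ∂μ
  set S := ∫ x, s x ∂μ
  have hA0 : 0 ≤ A := integral_nonneg fun x => by positivity
  have hS_le : S ^ 2 ≤ A * Np * V := by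
    simpa only [mul_assoc] using hCS.trans (mul_le_mul_of_nonneg_left hL2_le_L2p hA0)
  have hS_ge : (1 - ε) * A * Np * V ≤ S ^ 2 := by
    refine le_of_mul_le_mul_left ?_ hlam
    linarith [mul_le_mul_of_nonneg_right hR (by positivity : 0 ≤ (1 - ε) * Np * V)]
  constructor
  · calc (1 - ε) ^ 2 * ((1 / V * S) ^ 2 / Np) ≤ (1 / V * S) ^ 2 / Np :=
          mul_le_of_le_one_left (by positivity) (pow_le_one₀ (by linarith) (by linarith))
      _ ≤ 1 / V * A := by
          rw [div_le_iff₀ hNp0, mul_pow, one_div_pow, sq V]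
          field_simp
          linarith
  · rw [one_div_mul_eq_div _ (_ / Np), div_div, le_div_iff₀ (by positivity), mul_pow,
      one_div_pow, sq V]
    field_simp
    linarith

/-- Estimate (4.4) of Lemma 4.1: under the pinching condition `(Λ_{p,ε})`,
`(1−ε)² ((1/V)∫s)²/‖h‖_{2p}² ≤ ‖X‖₂² ≤ (1/(1−ε)) ((1/V)∫s)²/‖h‖_{2p}²`. -/
theorem L2_estimate_X_via_s
    {M : Type*} [MeasurableSpace M] {E : Type*}
    [NormedAddCommGroup E] [InnerProductSpace ℝ E]
    (μ : Measure M) [IsFiniteMeasure μ] (hμ : μ Set.univ ≠ 0)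
    (X h : M → E) (s t : M → ℝ) (lam p ε : ℝ)
    (hlam : 0 < lam) (hp : 1 < p) (hε0 : 0 < ε) (hε1 : ε < 1)
    (hX : AEStronglyMeasurable X μ) (hh : AEStronglyMeasurable h μ)
    (hX2 : Integrable (fun x => ‖X x‖ ^ 2) μ)
    (hh2 : Integrable (fun x => ‖h x‖ ^ 2) μ)
    (hh2p : Integrable (fun x => ‖h x‖ ^ (2 * p)) μ)
    (hh2ppos : 0 < ∫ x, ‖h x‖ ^ (2 * p) ∂μ)
    (htpos : 0 < ∫ x, t x ∂μ)
    (hs : Integrable s μ) (ht : Integrable t μ)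
    (V : ℝ) (hV : V = (μ Set.univ).toReal)
    (Np : ℝ) (hNp : Np = ((1 / V) * ∫ x, ‖h x‖ ^ (2 * p) ∂μ) ^ (1 / p))
    (HM : ∫ x, (inner ℝ (X x) (h x) : ℝ) ∂μ = - ∫ x, s x ∂μ)
    (hR : lam * ∫ x, ‖X x‖ ^ 2 ∂μ ≤ ∫ x, t x ∂μ)
    (pinch : lam * (∫ x, s x ∂μ) ^ 2 ≥ (1 - ε) * (∫ x, t x ∂μ) * Np * V) :
    (1 - ε) ^ 2 * (((1 / V) * ∫ x, s x ∂μ) ^ 2 / Np) ≤ (1 / V) * ∫ x, ‖X x‖ ^ 2 ∂μ ∧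
      (1 / V) * ∫ x, ‖X x‖ ^ 2 ∂μ ≤ (1 / (1 - ε)) * (((1 / V) * ∫ x, s x ∂μ) ^ 2 / Np) :=
  L2_estimate_X_via_s_general μ hμ X h s t lam p ε hlam hp hε0 hε1 hX hh hX2 hh2 hh2p hh2ppos V hV
    Np hNp HM hR pinch
end

section
/- Assume in addition that there are a measurable map ν : M → E with ‖ν(x)‖ = 1 for μ-almost every x and a measurable function φ : M → ℝ such that h = φ·ν (the generalized mean curvature vector is normal, as holds for H_S on a hypersurface with unit normal ν). Let p > 1 and ε ∈ (0,1), assume ‖h‖^{2p} is integrable with ∫_M ‖h‖^{2p} dμ > 0, that ∫_M t dμ > 0, and that the hypotheses (HM), (R) and the pinching condition (Λ_{p,ε}) hold. Then ∫_M ‖X − ⟨X, ν⟩ν‖² dμ ≤ ε ∫_M ‖X‖² dμ. (This is Lemma 4.2 of the paper: under the pinching, the tangential part X^T of the position vector satisfies ‖X^T‖₂² ≤ ε ‖X‖₂².) -/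
open MeasureTheory

private lemma memLp_of_int_rpow {α : Type*} [MeasurableSpace α] {μ : Measure α} {f : α → ℝ}
    (hf : AEStronglyMeasurable f μ) {r : ℝ} (hr : 0 < r)
    (hint : Integrable (fun x => ‖f x‖ ^ r) μ) : MemLp f (ENNReal.ofReal r) μ := by
  refine ⟨hf, ?_⟩
  rw [eLpNorm_lt_top_iff_lintegral_rpow_enorm_lt_top (by simp [hr, not_le]) ENNReal.ofReal_ne_top,
    ENNReal.toReal_ofReal hr.le]
  have h2 := hint.hasFiniteIntegral
  rw [HasFiniteIntegral] at h2
  refine lt_of_eq_of_lt ?_ h2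
  refine lintegral_congr fun x => ?_
  rw [Real.enorm_rpow_of_nonneg (norm_nonneg _) hr.le, enorm_norm]

private lemma rpow_half_sq {a : ℝ} (ha : 0 ≤ a) : (a ^ ((1:ℝ)/2)) ^ 2 = a := by
  rw [← Real.rpow_natCast (a ^ ((1:ℝ)/2)) 2, ← Real.rpow_mul ha]
  norm_num

/-- Lemma 4.2: under the pinching condition `(Λ_{p,ε})`, if the generalized mean
curvature vector `h` is normal, `h = φ·ν` with `‖ν‖ = 1` a.e., then the tangential
part of the position vector satisfies `∫ ‖X − ⟨X,ν⟩ν‖² ≤ ε ∫ ‖X‖²`. -/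
theorem L2_estimate_tangential_part
    {M : Type*} [MeasurableSpace M] {E : Type*}
    [NormedAddCommGroup E] [InnerProductSpace ℝ E]
    (μ : Measure M) [IsFiniteMeasure μ] (hμ : μ Set.univ ≠ 0)
    (X h : M → E) (s t : M → ℝ) (lam p ε : ℝ)
    (hlam : 0 < lam) (hp : 1 < p) (hε0 : 0 < ε) (hε1 : ε < 1)
    (hX : AEStronglyMeasurable X μ) (hh : AEStronglyMeasurable h μ)
    (hX2 : Integrable (fun x => ‖X x‖ ^ 2) μ)
    (hh2 : Integrable (fun x => ‖h x‖ ^ 2) μ)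
    (hh2p : Integrable (fun x => ‖h x‖ ^ (2 * p)) μ)
    (hh2ppos : 0 < ∫ x, ‖h x‖ ^ (2 * p) ∂μ)
    (htpos : 0 < ∫ x, t x ∂μ)
    (hs : Integrable s μ) (ht : Integrable t μ)
    (ν : M → E) (φ : M → ℝ)
    (hν : AEStronglyMeasurable ν μ) (hφ : Measurable φ)
    (hν1 : ∀ᵐ x ∂μ, ‖ν x‖ = 1)
    (hhνφ : ∀ x, h x = φ x • ν x)
    (V : ℝ) (hV : V = (μ Set.univ).toReal)
    (Np : ℝ) (hNp : Np = ((1 / V) * ∫ x, ‖h x‖ ^ (2 * p) ∂μ) ^ (1 / p))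
    (HM : ∫ x, (inner ℝ (X x) (h x) : ℝ) ∂μ = - ∫ x, s x ∂μ)
    (hR : lam * ∫ x, ‖X x‖ ^ 2 ∂μ ≤ ∫ x, t x ∂μ)
    (pinch : lam * (∫ x, s x ∂μ) ^ 2 ≥ (1 - ε) * (∫ x, t x ∂μ) * Np * V) :
    ∫ x, ‖X x - (inner ℝ (X x) (ν x) : ℝ) • ν x‖ ^ 2 ∂μ ≤ ε * ∫ x, ‖X x‖ ^ 2 ∂μ := by
  have hVpos : 0 < V := by
    rw [hV]; exact ENNReal.toReal_pos hμ (measure_ne_top μ _)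
  set g : M → ℝ := fun x => (inner ℝ (X x) (ν x) : ℝ) with hgdef
  have hg_meas : AEStronglyMeasurable g μ := hX.inner hν
  have hgbd : ∀ᵐ x ∂μ, |g x| ≤ ‖X x‖ := by
    filter_upwards [hν1] with x hx
    calc |g x| ≤ ‖X x‖ * ‖ν x‖ := abs_real_inner_le_norm _ _
      _ = ‖X x‖ := by rw [hx, mul_one]
  have hg2_meas : AEStronglyMeasurable (fun x => g x ^ 2) μ :=
    (hg_meas.mul hg_meas).congr (Filter.Eventually.of_forall fun x => (pow_two (g x)).symm)
  have hg2_int : Integrable (fun x => g x ^ 2) μ := by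
    refine hX2.mono hg2_meas ?_
    filter_upwards [hgbd] with x hx
    rw [Real.norm_eq_abs, Real.norm_eq_abs, abs_pow, abs_pow, abs_norm]
    exact pow_le_pow_left₀ (abs_nonneg _) hx 2
  -- the pointwise identity for the tangential part
  have hXT : ∫ x, ‖X x - g x • ν x‖ ^ 2 ∂μ
      = (∫ x, ‖X x‖ ^ 2 ∂μ) - ∫ x, g x ^ 2 ∂μ := by
    have he : (fun x => ‖X x - g x • ν x‖ ^ 2) =ᵐ[μ] fun x => ‖X x‖ ^ 2 - g x ^ 2 := by
      filter_upwards [hν1] with x hx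
      rw [norm_sub_sq_real, real_inner_smul_right, norm_smul, hx, mul_one,
        Real.norm_eq_abs, sq_abs]
      ring
    rw [integral_congr_ae he, integral_sub hX2 hg2_int]
  -- |φ| = ‖h‖ a.e.
  have hφh : ∀ᵐ x ∂μ, |φ x| = ‖h x‖ := by
    filter_upwards [hν1] with x hx
    rw [hhνφ x, norm_smul, hx, mul_one, Real.norm_eq_abs]
  have hφ2_int : Integrable (fun x => φ x ^ 2) μ := by
    refine hh2.congr ?_
    filter_upwards [hφh] with x hx
    rw [← hx, sq_abs]
  have hφ2_eq : ∫ x, φ x ^ 2 ∂μ = ∫ x, ‖h x‖ ^ 2 ∂μ := by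
    refine integral_congr_ae ?_
    filter_upwards [hφh] with x hx
    rw [← hx, sq_abs]
  -- Cauchy–Schwarz: (∫ g φ)² ≤ (∫ g²)(∫ φ²)
  have hgL2 : MemLp g 2 μ := (memLp_two_iff_integrable_sq hg_meas).2 hg2_int
  have hφL2 : MemLp φ 2 μ := (memLp_two_iff_integrable_sq hφ.aestronglyMeasurable).2 hφ2_int
  have hBnn : 0 ≤ ∫ x, g x ^ 2 ∂μ := integral_nonneg fun x => sq_nonneg _
  have hCnn : 0 ≤ ∫ x, φ x ^ 2 ∂μ := integral_nonneg fun x => sq_nonneg _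
  have hCS : (∫ x, g x * φ x ∂μ) ^ 2 ≤ (∫ x, g x ^ 2 ∂μ) * ∫ x, φ x ^ 2 ∂μ := by
    have h22 : (2:ℝ).HolderConjugate 2 := (Real.holderConjugate_iff_eq_conjExponent one_lt_two).2 (by norm_num)
    have e2 : ENNReal.ofReal (2:ℝ) = 2 := by norm_num
    have hg' : MemLp (fun x => |g x|) (ENNReal.ofReal (2:ℝ)) μ := by
      rw [e2]; simpa [Real.norm_eq_abs] using hgL2.norm
    have hφ' : MemLp (fun x => |φ x|) (ENNReal.ofReal (2:ℝ)) μ := by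
      rw [e2]; simpa [Real.norm_eq_abs] using hφL2.norm
    have hH := integral_mul_le_Lp_mul_Lq_of_nonneg h22
      (Filter.Eventually.of_forall fun x => abs_nonneg (g x))
      (Filter.Eventually.of_forall fun x => abs_nonneg (φ x)) hg' hφ'
    have hr2 : ∀ a : ℝ, |a| ^ (2:ℝ) = a ^ 2 := fun a => by
      rw [show (2:ℝ) = ((2:ℕ):ℝ) by norm_num, Real.rpow_natCast, sq_abs]
    simp_rw [hr2] at hH
    have habs : |∫ x, g x * φ x ∂μ| ≤ ∫ x, |g x| * |φ x| ∂μ := by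
      simpa [Real.norm_eq_abs, abs_mul] using
        norm_integral_le_integral_norm (μ := μ) (fun x => g x * φ x)
    calc (∫ x, g x * φ x ∂μ) ^ 2 = |∫ x, g x * φ x ∂μ| ^ 2 := (sq_abs _).symm
      _ ≤ ((∫ x, g x ^ 2 ∂μ) ^ ((1:ℝ)/2) * (∫ x, φ x ^ 2 ∂μ) ^ ((1:ℝ)/2)) ^ 2 :=
          pow_le_pow_left₀ (abs_nonneg _) (le_trans habs (by simpa using hH)) 2
      _ = (∫ x, g x ^ 2 ∂μ) * ∫ x, φ x ^ 2 ∂μ := by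
          rw [mul_pow, rpow_half_sq hBnn, rpow_half_sq hCnn]
  -- ∫⟨X,h⟩ = ∫ g φ
  have hSint : ∫ x, g x * φ x ∂μ = - ∫ x, s x ∂μ := by
    rw [← HM]
    refine integral_congr_ae (Filter.Eventually.of_forall fun x => ?_)
    show g x * φ x = inner ℝ (X x) (h x)
    rw [hhνφ x, real_inner_smul_right]
    exact mul_comm _ _
  -- Hölder: ∫‖h‖² ≤ Np * V
  set q : ℝ := Real.conjExponent p with hqdef
  have hq : p.HolderConjugate q := Real.HolderConjugate.conjExponent hp
  have hp0 : 0 < p := lt_trans one_pos hp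
  have hpow : ∀ x : M, (‖h x‖ ^ 2) ^ p = ‖h x‖ ^ (2 * p) := fun x => by
    rw [show ((‖h x‖:ℝ) ^ 2) = ‖h x‖ ^ ((2:ℕ):ℝ) by rw [Real.rpow_natCast],
      ← Real.rpow_mul (norm_nonneg _)]
    norm_num
  have hHold : ∫ x, ‖h x‖ ^ 2 ∂μ ≤ Np * V := by
    have hf_mem : MemLp (fun x => ‖h x‖ ^ 2) (ENNReal.ofReal p) μ := by
      refine memLp_of_int_rpow ?_ hp0 ?_
      · exact (hh.norm.mul hh.norm).congr
          (Filter.Eventually.of_forall fun x => (pow_two ‖h x‖).symm)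
      · refine hh2p.congr (Filter.Eventually.of_forall fun x => ?_)
        show ‖h x‖ ^ (2 * p) = ‖(‖h x‖ ^ 2 : ℝ)‖ ^ p
        rw [Real.norm_of_nonneg (pow_nonneg (norm_nonneg _) 2), hpow x]
    have h1 : MemLp (fun _ : M => (1:ℝ)) (ENNReal.ofReal q) μ := memLp_const 1
    have hH := integral_mul_le_Lp_mul_Lq_of_nonneg hq
      (Filter.Eventually.of_forall fun x => pow_nonneg (norm_nonneg (h x)) 2)
      (Filter.Eventually.of_forall fun _ => zero_le_one) hf_mem h1
    simp_rw [mul_one, hpow, Real.one_rpow] at hH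
    have hint1 : ∫ _x, (1:ℝ) ∂μ = V := by
      rw [integral_const, smul_eq_mul, mul_one, hV, measureReal_def]
    rw [hint1] at hH
    refine le_trans hH (le_of_eq ?_)
    have hI2p : (0:ℝ) ≤ ∫ x, ‖h x‖ ^ (2*p) ∂μ := hh2ppos.le
    have h1q : 1/q = 1 - 1/p := by
      have := hq.inv_add_inv_eq_one
      rw [inv_eq_one_div, inv_eq_one_div] at this
      linarith
    rw [hNp, one_div V, Real.mul_rpow (inv_nonneg.2 hVpos.le) hI2p,
      Real.inv_rpow hVpos.le, h1q, Real.rpow_sub hVpos, Real.rpow_one]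
    rw [one_div p]
    field_simp
  -- Np V > 0
  have hNp_pos : 0 < Np := by
    rw [hNp]; exact Real.rpow_pos_of_pos (mul_pos (by positivity) hh2ppos) _
  have hNpV : 0 < Np * V := mul_pos hNp_pos hVpos
  -- combine everything
  have hAnn : 0 ≤ ∫ x, ‖X x‖ ^ 2 ∂μ := integral_nonneg fun x => sq_nonneg _
  have hS2 : (∫ x, s x ∂μ) ^ 2 ≤ (∫ x, g x ^ 2 ∂μ) * (Np * V) := by
    have : (∫ x, s x ∂μ) ^ 2 = (∫ x, g x * φ x ∂μ) ^ 2 := by rw [hSint]; ring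
    rw [this]
    refine le_trans hCS ?_
    have : ∫ x, φ x ^ 2 ∂μ ≤ Np * V := by rw [hφ2_eq]; exact hHold
    exact mul_le_mul_of_nonneg_left this hBnn
  have hkey : (1 - ε) * (∫ x, ‖X x‖ ^ 2 ∂μ) ≤ ∫ x, g x ^ 2 ∂μ := by
    have h1 : (1 - ε) * (lam * ∫ x, ‖X x‖ ^ 2 ∂μ) * (Np * V)
        ≤ (1 - ε) * (∫ x, t x ∂μ) * (Np * V) := by
      have := mul_le_mul_of_nonneg_left hR (by linarith : (0:ℝ) ≤ 1 - ε)
      exact mul_le_mul_of_nonneg_right this hNpV.le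
    have h2 : (1 - ε) * (∫ x, t x ∂μ) * (Np * V) ≤ lam * (∫ x, s x ∂μ) ^ 2 := by
      calc (1 - ε) * (∫ x, t x ∂μ) * (Np * V)
          = (1 - ε) * (∫ x, t x ∂μ) * Np * V := by ring
        _ ≤ lam * (∫ x, s x ∂μ) ^ 2 := pinch
    have h3 : lam * (∫ x, s x ∂μ) ^ 2 ≤ lam * ((∫ x, g x ^ 2 ∂μ) * (Np * V)) :=
      mul_le_mul_of_nonneg_left hS2 hlam.le
    have h4 : (1 - ε) * (lam * ∫ x, ‖X x‖ ^ 2 ∂μ) * (Np * V)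
        ≤ lam * ((∫ x, g x ^ 2 ∂μ) * (Np * V)) := le_trans h1 (le_trans h2 h3)
    have h5 : lam * ((1 - ε) * (∫ x, ‖X x‖ ^ 2 ∂μ)) * (Np * V)
        ≤ lam * (∫ x, g x ^ 2 ∂μ) * (Np * V) := by
      calc lam * ((1 - ε) * (∫ x, ‖X x‖ ^ 2 ∂μ)) * (Np * V)
          = (1 - ε) * (lam * ∫ x, ‖X x‖ ^ 2 ∂μ) * (Np * V) := by ring
        _ ≤ lam * ((∫ x, g x ^ 2 ∂μ) * (Np * V)) := h4
        _ = lam * (∫ x, g x ^ 2 ∂μ) * (Np * V) := by ring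
    have h6 := le_of_mul_le_mul_right h5 hNpV
    exact le_of_mul_le_mul_left h6 hlam
  rw [hXT]
  linarith
end

section
/- Let p > 1 and ε ∈ (0,1). Assume ‖h‖^{2p} is integrable with ∫_M ‖h‖^{2p} dμ > 0, that ∫_M t dμ > 0, and that the hypotheses (HM), (R) and the pinching condition (Λ_{p,ε}) hold. Then ‖X‖₂ > 0, ‖X‖₂ ≤ (1−ε)^{−p/(2(p−1))} ‖X‖₁, and there exists a constant C depending only on p such that 1 − ‖X‖₁/‖X‖₂ ≤ C·ε. (This is Lemma 4.5 of the paper: under the pinching condition the L¹ and L² norms of the position vector nearly agree; the proof combines Lemma 4.1, Hölder's inequality ∫|⟨X,h⟩| ≤ ‖h‖_{2p}‖X‖_{2p/(2p−1)}V and the interpolation ‖X‖_{2p/(2p−1)} ≤ ‖X‖₁^{1−1/p}‖X‖₂^{1/p}.) -/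
open MeasureTheory Real
open scoped ENNReal

lemma memℒp_ofReal_of_integrable_norm_rpow {α E : Type*} [MeasurableSpace α]
    [NormedAddCommGroup E] {μ : Measure α} {f : α → E} {a : ℝ} (ha : 0 < a)
    (hm : AEStronglyMeasurable f μ) (hi : Integrable (fun x => ‖f x‖ ^ a) μ) :
    MemLp f (ENNReal.ofReal a) μ := by
  have h0 : ENNReal.ofReal a ≠ 0 := by simp [ENNReal.ofReal_eq_zero, not_le, ha]
  have ht : ENNReal.ofReal a ≠ ⊤ := ENNReal.ofReal_ne_top
  have := (memLp_norm_rpow_iff (p := ENNReal.ofReal a) hm h0 ht)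
  rw [ENNReal.div_self h0 ht, ENNReal.toReal_ofReal ha.le] at this
  exact this.mp (memLp_one_iff_integrable.mpr hi)

lemma memℒp_rpow_norm {α E : Type*} [MeasurableSpace α]
    [NormedAddCommGroup E] {μ : Measure α} {X : α → E} {c a : ℝ} (hc : 0 < c) (ha : 0 < a)
    (hm : AEStronglyMeasurable X μ) (hi : Integrable (fun x => ‖X x‖ ^ (c * a)) μ) :
    MemLp (fun x => ‖X x‖ ^ c) (ENNReal.ofReal a) μ := by
  apply memℒp_ofReal_of_integrable_norm_rpow ha
  · exact (Real.continuous_rpow_const hc.le).comp_aestronglyMeasurable hm.norm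
  · have he : (fun x => ‖(‖X x‖ ^ c : ℝ)‖ ^ a) = fun x => ‖X x‖ ^ (c * a) := by
      funext x
      rw [Real.norm_eq_abs, abs_of_nonneg (Real.rpow_nonneg (norm_nonneg _) _),
        ← Real.rpow_mul (norm_nonneg _)]
    rw [he]; exact hi

lemma bern {α ε : ℝ} (hα : 0 < α) (hε : 0 < ε) (hε1 : ε < 1) :
    1 - (1 - ε) ^ α ≤ (α + 1) * ε := by
  rcases le_total α 1 with h1 | h1
  · have : (1 - ε : ℝ) ^ (1:ℝ) ≤ (1 - ε) ^ α :=
      Real.rpow_le_rpow_of_exponent_ge (by linarith) (by linarith) h1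
    rw [Real.rpow_one] at this
    nlinarith
  · have h := one_add_mul_self_le_rpow_one_add (s := -ε) (by linarith) h1
    have he : (1 : ℝ) + -ε = 1 - ε := by ring
    rw [he] at h
    nlinarith

set_option maxHeartbeats 1000000 in
/-- Lemma 4.5: under the pinching condition `(Λ_{p,ε})`, the L¹ and L² norms of
the position vector nearly agree: `‖X‖₂ > 0`,
`‖X‖₂ ≤ (1−ε)^{−p/(2(p−1))} ‖X‖₁` and `1 − ‖X‖₁/‖X‖₂ ≤ C(p)·ε`. -/
theorem L1_L2_pinching (p : ℝ) (hp : 1 < p) :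
    ∃ C : ℝ, 0 < C ∧
      ∀ (M E : Type) [MeasurableSpace M] [NormedAddCommGroup E]
        [InnerProductSpace ℝ E] (μ : Measure M) [IsFiniteMeasure μ],
        μ Set.univ ≠ 0 →
        ∀ (X h : M → E) (s t : M → ℝ) (lam ε V Np : ℝ),
          0 < lam → 0 < ε → ε < 1 →
          AEStronglyMeasurable X μ → AEStronglyMeasurable h μ →
          Integrable (fun x => ‖X x‖ ^ 2) μ →
          Integrable (fun x => ‖h x‖ ^ 2) μ →
          Integrable (fun x => ‖h x‖ ^ (2 * p)) μ →
          0 < ∫ x, ‖h x‖ ^ (2 * p) ∂μ →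
          0 < ∫ x, t x ∂μ →
          Integrable s μ → Integrable t μ →
          V = (μ Set.univ).toReal →
          Np = ((1 / V) * ∫ x, ‖h x‖ ^ (2 * p) ∂μ) ^ (1 / p) →
          (∫ x, (inner ℝ (X x) (h x) : ℝ) ∂μ = - ∫ x, s x ∂μ) →
          lam * ∫ x, ‖X x‖ ^ 2 ∂μ ≤ ∫ x, t x ∂μ →
          lam * (∫ x, s x ∂μ) ^ 2 ≥ (1 - ε) * (∫ x, t x ∂μ) * Np * V →
          0 < ((1 / V) * ∫ x, ‖X x‖ ^ 2 ∂μ) ^ ((1 : ℝ) / 2) ∧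
            ((1 / V) * ∫ x, ‖X x‖ ^ 2 ∂μ) ^ ((1 : ℝ) / 2) ≤
              (1 - ε) ^ (-(p / (2 * (p - 1)))) * ((1 / V) * ∫ x, ‖X x‖ ∂μ) ∧
            1 - ((1 / V) * ∫ x, ‖X x‖ ∂μ) /
                  ((1 / V) * ∫ x, ‖X x‖ ^ 2 ∂μ) ^ ((1 : ℝ) / 2) ≤ C * ε := by
  have hp0 : 0 < p := by linarith
  have hp1 : 0 < p - 1 := by linarith
  set α : ℝ := p / (2 * (p - 1)) with hα_def
  have hα : 0 < α := by positivity
  refine ⟨α + 1, by linarith, ?_⟩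
  intro M E _ _ _ μ _ hμ0 X h s t lam ε V Np hlam hε hε1 hXm hhm hX2 hh2 hh2p hHpos hTpos
    hs ht hV hNpdef hHM hR hpinch
  have h1e : 0 < 1 - ε := by linarith
  have hV0 : 0 < V := by
    rw [hV]; exact ENNReal.toReal_pos hμ0 (measure_ne_top μ _)
  set θ : ℝ := (p - 1) / p with hθ_def
  have hθ : 0 < θ := by positivity
  set A1 : ℝ := ∫ x, ‖X x‖ ∂μ with hA1_def
  set A2 : ℝ := ∫ x, ‖X x‖ ^ 2 ∂μ with hA2_def
  set H : ℝ := ∫ x, ‖h x‖ ^ (2 * p) ∂μ with hH_def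
  set S : ℝ := ∫ x, s x ∂μ with hS_def
  set T : ℝ := ∫ x, t x ∂μ with hT_def
  have hA1nn : 0 ≤ A1 := integral_nonneg fun x => norm_nonneg _
  have hA2nn : 0 ≤ A2 := integral_nonneg fun x => by positivity
  -- basic Memℒp facts
  have hX2m : MemLp X 2 μ := (memLp_two_iff_integrable_sq_norm hXm).mpr hX2
  have hh2m : MemLp h 2 μ := (memLp_two_iff_integrable_sq_norm hhm).mpr hh2
  have hX1int : Integrable (fun x => ‖X x‖) μ :=
    (memLp_one_iff_integrable.mp (hX2m.mono_exponent one_le_two)).norm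
  have hprodint : Integrable (fun x => ‖X x‖ * ‖h x‖) μ := by
    refine Integrable.mono' (hX2.add hh2) (hXm.norm.mul hhm.norm) ?_
    filter_upwards with x
    have h1 : ‖X x‖ * ‖h x‖ ≤ ‖X x‖ ^ 2 + ‖h x‖ ^ 2 := by
      nlinarith [norm_nonneg (X x), norm_nonneg (h x)]
    rw [Real.norm_eq_abs, abs_of_nonneg (by positivity)]
    exact h1
  -- |S| ≤ ∫ ‖X‖ ‖h‖
  have habsS : |S| ≤ ∫ x, ‖X x‖ * ‖h x‖ ∂μ := by
    have h1 : |S| = ‖∫ x, (inner ℝ (X x) (h x) : ℝ) ∂μ‖ := by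
      rw [hHM]; simp [Real.norm_eq_abs, abs_neg]
    rw [h1]
    refine (norm_integral_le_integral_norm _).trans ?_
    refine integral_mono_of_nonneg (Filter.Eventually.of_forall fun x => norm_nonneg _)
      hprodint (Filter.Eventually.of_forall fun x => ?_)
    exact norm_inner_le_norm (X x) (h x)
  -- positivity of A2
  have hNp : 0 < Np := by
    rw [hNpdef]; exact Real.rpow_pos_of_pos (by positivity) _
  have hSpos : 0 < S ^ 2 := by
    have h1 : 0 < (1 - ε) * T * Np * V := by positivity
    nlinarith
  have hA2pos : 0 < A2 := by
    rcases hA2nn.lt_or_eq with h1 | h1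
    · exact h1
    · exfalso
      have hconj : Real.HolderConjugate 2 2 := Real.HolderConjugate.two_two
      have hX2' : MemLp X (ENNReal.ofReal 2) μ := by
        rw [ENNReal.ofReal_ofNat]; exact hX2m
      have hh2' : MemLp h (ENNReal.ofReal 2) μ := by
        rw [ENNReal.ofReal_ofNat]; exact hh2m
      have hcs := integral_mul_norm_le_Lp_mul_Lq (μ := μ) (f := X) (g := h) hconj hX2' hh2'
      have he2 : ∀ g : M → E, (fun x => ‖g x‖ ^ (2:ℝ)) = fun x => ‖g x‖ ^ 2 := by
        intro g; funext x; exact Real.rpow_two _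
      rw [he2 X, he2 h, ← hA2_def, ← h1] at hcs
      rw [Real.zero_rpow (by norm_num), zero_mul] at hcs
      have h2 : |S| ≤ 0 := habsS.trans hcs
      have h3 : S = 0 := abs_nonpos_iff.mp h2
      rw [h3] at hSpos; simp at hSpos
  -- Hölder with exponents (2p, q)
  set q : ℝ := 2 * p / (2 * p - 1) with hq_def
  have h2p1 : 0 < 2 * p - 1 := by linarith
  have hq0 : 0 < q := by positivity
  have hpq : Real.HolderConjugate (2 * p) q :=
    (Real.holderConjugate_iff_eq_conjExponent (by linarith)).mpr hq_def
  have hh2pm : MemLp h (ENNReal.ofReal (2 * p)) μ :=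
    memℒp_ofReal_of_integrable_norm_rpow (by linarith) hhm hh2p
  have hXq : MemLp X (ENNReal.ofReal q) μ := by
    refine hX2m.mono_exponent ?_
    have h2 : (2 : ℝ≥0∞) = ENNReal.ofReal 2 := by rw [ENNReal.ofReal_ofNat]
    rw [h2]
    refine ENNReal.ofReal_le_ofReal ?_
    rw [hq_def, div_le_iff₀ h2p1]; nlinarith
  set B : ℝ := ∫ x, ‖X x‖ ^ q ∂μ with hB_def
  have hBnn : 0 ≤ B := integral_nonneg fun x => Real.rpow_nonneg (norm_nonneg _) _
  have key1 : ∫ x, ‖X x‖ * ‖h x‖ ∂μ ≤ H ^ (1 / (2 * p)) * B ^ (1 / q) := by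
    have h1 := integral_mul_norm_le_Lp_mul_Lq (μ := μ) (f := h) (g := X) hpq hh2pm hXq
    have hcomm : ∫ x, ‖h x‖ * ‖X x‖ ∂μ = ∫ x, ‖X x‖ * ‖h x‖ ∂μ := by
      congr 1; funext x; ring
    rw [hcomm] at h1
    exact h1
  -- interpolation Hölder with exponents (a, b)
  set c1 : ℝ := 2 * (p - 1) / (2 * p - 1) with hc1_def
  set c2 : ℝ := 2 / (2 * p - 1) with hc2_def
  set a : ℝ := (2 * p - 1) / (2 * (p - 1)) with ha_def
  set b : ℝ := 2 * p - 1 with hb_def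
  have hc1 : 0 < c1 := by positivity
  have hc2 : 0 < c2 := by positivity
  have ha0 : 0 < a := by positivity
  have hb0 : 0 < b := h2p1
  have hab : Real.HolderConjugate a b := by
    refine ⟨?_, ha0, hb0⟩
    have := hp1.ne'; have := h2p1.ne'
    rw [ha_def, inv_div, inv_one, ← one_div b, ← add_div, div_eq_iff this, hb_def]; ring
  have hc1a : c1 * a = 1 := by rw [hc1_def, ha_def]; field_simp
  have hc2b : c2 * b = 2 := by rw [hc2_def, hb_def]; field_simp; exact div_self h2p1.ne'
  have hcc : c1 + c2 = q := by rw [hc1_def, hc2_def, hq_def]; field_simp; ring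
  have hfmem : MemLp (fun x => ‖X x‖ ^ c1) (ENNReal.ofReal a) μ := by
    refine memℒp_rpow_norm hc1 ha0 hXm ?_
    rw [hc1a]; simpa [Real.rpow_one] using hX1int
  have hgmem : MemLp (fun x => ‖X x‖ ^ c2) (ENNReal.ofReal b) μ := by
    refine memℒp_rpow_norm hc2 hb0 hXm ?_
    rw [hc2b]
    have h2 : (fun x => ‖X x‖ ^ (2:ℝ)) = fun x => ‖X x‖ ^ 2 := by
      funext x; exact Real.rpow_two _
    rw [h2]; exact hX2
  have key2 : B ≤ A1 ^ (1 / a) * A2 ^ (1 / b) := by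
    have hH2 := integral_mul_le_Lp_mul_Lq_of_nonneg (μ := μ) hab
      (Filter.Eventually.of_forall fun x => Real.rpow_nonneg (norm_nonneg _) _)
      (Filter.Eventually.of_forall fun x => Real.rpow_nonneg (norm_nonneg _) _)
      hfmem hgmem
    have e1 : ∫ x, ‖X x‖ ^ c1 * ‖X x‖ ^ c2 ∂μ = B := by
      rw [hB_def]; congr 1; funext x
      rw [← Real.rpow_add' (norm_nonneg _) (by rw [hcc]; exact hq0.ne'), hcc]
    have e2 : ∫ x, (‖X x‖ ^ c1) ^ a ∂μ = A1 := by
      rw [hA1_def]; congr 1; funext x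
      rw [← Real.rpow_mul (norm_nonneg _), hc1a, Real.rpow_one]
    have e3 : ∫ x, (‖X x‖ ^ c2) ^ b ∂μ = A2 := by
      rw [hA2_def]; congr 1; funext x
      rw [← Real.rpow_mul (norm_nonneg _), hc2b, Real.rpow_two]
    rw [e1, e2, e3] at hH2
    exact hH2
  -- combine
  have key3 : |S| ≤ H ^ (1 / (2 * p)) * (A1 ^ θ * A2 ^ (1 / (2 * p))) := by
    have hBq : B ^ (1 / q) ≤ A1 ^ θ * A2 ^ (1 / (2 * p)) := by
      have h1 : B ^ (1 / q) ≤ (A1 ^ (1 / a) * A2 ^ (1 / b)) ^ (1 / q) :=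
        Real.rpow_le_rpow hBnn key2 (by positivity)
      have h2 : (A1 ^ (1 / a) * A2 ^ (1 / b)) ^ (1 / q) =
          A1 ^ ((1 / a) * (1 / q)) * A2 ^ ((1 / b) * (1 / q)) := by
        rw [Real.mul_rpow (Real.rpow_nonneg hA1nn _) (Real.rpow_nonneg hA2nn _),
          ← Real.rpow_mul hA1nn, ← Real.rpow_mul hA2nn]
      have h3 : (1 / a) * (1 / q) = θ := by
        rw [ha_def, hq_def, hθ_def]; field_simp
      have h4 : (1 / b) * (1 / q) = 1 / (2 * p) := by
        rw [hb_def, hq_def]; field_simp; exact div_self h2p1.ne'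
      rw [h2, h3, h4] at h1
      exact h1
    calc |S| ≤ H ^ (1 / (2 * p)) * B ^ (1 / q) := habsS.trans key1
      _ ≤ H ^ (1 / (2 * p)) * (A1 ^ θ * A2 ^ (1 / (2 * p))) :=
        mul_le_mul_of_nonneg_left hBq (Real.rpow_nonneg hHpos.le _)
  clear_value α θ A1 A2 H S T q B c1 c2 a b
  have key4 : S ^ 2 ≤ H ^ (1 / p) * (A1 ^ (2 * θ) * A2 ^ (1 / p)) := by
    have h1 : S ^ 2 ≤ (H ^ (1 / (2 * p)) * (A1 ^ θ * A2 ^ (1 / (2 * p)))) ^ 2 := by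
      rw [← sq_abs]
      exact pow_le_pow_left₀ (abs_nonneg S) key3 2
    have eH : (H ^ (1 / (2 * p))) ^ 2 = H ^ (1 / p) := by
      rw [← Real.rpow_natCast (H ^ (1 / (2 * p))) 2, ← Real.rpow_mul hHpos.le]
      congr 1; push_cast; field_simp
    have eA1 : (A1 ^ θ) ^ 2 = A1 ^ (2 * θ) := by
      rw [← Real.rpow_natCast (A1 ^ θ) 2, ← Real.rpow_mul hA1nn]
      congr 1; push_cast; ring
    have eA2 : (A2 ^ (1 / (2 * p))) ^ 2 = A2 ^ (1 / p) := by
      rw [← Real.rpow_natCast (A2 ^ (1 / (2 * p))) 2, ← Real.rpow_mul hA2nn]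
      congr 1; push_cast; field_simp
    calc S ^ 2 ≤ (H ^ (1 / (2 * p)) * (A1 ^ θ * A2 ^ (1 / (2 * p)))) ^ 2 := h1
      _ = H ^ (1 / p) * (A1 ^ (2 * θ) * A2 ^ (1 / p)) := by
        rw [mul_pow, mul_pow, eH, eA1, eA2]
  -- use pinching and Rayleigh
  have m3 : A2 * ((1 - ε) * Np * V) ≤ H ^ (1 / p) * (A1 ^ (2 * θ) * A2 ^ (1 / p)) := by
    have m1 : (1 - ε) * (lam * A2) * Np * V ≤ (1 - ε) * T * Np * V := by
      have h1 := mul_le_mul_of_nonneg_left hR h1e.le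
      have h2 := mul_le_mul_of_nonneg_right h1 hNp.le
      exact mul_le_mul_of_nonneg_right h2 hV0.le
    have m2 : (1 - ε) * T * Np * V ≤ lam * (H ^ (1 / p) * (A1 ^ (2 * θ) * A2 ^ (1 / p))) :=
      le_trans hpinch (mul_le_mul_of_nonneg_left key4 hlam.le)
    have h3 : lam * (A2 * ((1 - ε) * Np * V)) ≤
        lam * (H ^ (1 / p) * (A1 ^ (2 * θ) * A2 ^ (1 / p))) := by
      calc lam * (A2 * ((1 - ε) * Np * V)) = (1 - ε) * (lam * A2) * Np * V := by ring
        _ ≤ (1 - ε) * T * Np * V := m1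
        _ ≤ _ := m2
    exact le_of_mul_le_mul_left h3 hlam
  have hNpV : Np * V = H ^ (1 / p) * V ^ θ := by
    rw [hNpdef]
    rw [show (1 / V) * H = H * V⁻¹ by ring,
      Real.mul_rpow hHpos.le (inv_nonneg.mpr hV0.le),
      Real.inv_rpow hV0.le, ← Real.rpow_neg hV0.le]
    calc H ^ (1 / p) * V ^ (-(1 / p)) * V
        = H ^ (1 / p) * (V ^ (-(1 / p)) * V ^ (1 : ℝ)) := by rw [Real.rpow_one]; ring
      _ = H ^ (1 / p) * V ^ (-(1 / p) + 1) := by rw [← Real.rpow_add hV0]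
      _ = H ^ (1 / p) * V ^ θ := by
          rw [show -(1 / p) + 1 = θ by rw [hθ_def, sub_div, div_self hp0.ne']; ring]
  have m4 : (1 - ε) * A2 * V ^ θ ≤ A1 ^ (2 * θ) * A2 ^ (1 / p) := by
    have hH13 : 0 < H ^ (1 / p) := Real.rpow_pos_of_pos hHpos _
    refine le_of_mul_le_mul_left ?_ hH13
    calc H ^ (1 / p) * ((1 - ε) * A2 * V ^ θ) = A2 * ((1 - ε) * Np * V) := by
          rw [show (1 - ε) * Np * V = (1 - ε) * (Np * V) by ring, hNpV]; ring
      _ ≤ H ^ (1 / p) * (A1 ^ (2 * θ) * A2 ^ (1 / p)) := m3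
  have hA2split : A2 ^ θ * A2 ^ (1 / p) = A2 := by
    rw [← Real.rpow_add hA2pos, show θ + 1 / p = 1 by rw [hθ_def]; field_simp; ring,
      Real.rpow_one]
  have m5 : (1 - ε) * A2 ^ θ * V ^ θ ≤ A1 ^ (2 * θ) := by
    have h2 : 0 < A2 ^ (1 / p) := Real.rpow_pos_of_pos hA2pos _
    refine le_of_mul_le_mul_right ?_ h2
    calc (1 - ε) * A2 ^ θ * V ^ θ * A2 ^ (1 / p)
        = (1 - ε) * (A2 ^ θ * A2 ^ (1 / p)) * V ^ θ := by ring
      _ = (1 - ε) * A2 * V ^ θ := by rw [hA2split]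
      _ ≤ A1 ^ (2 * θ) * A2 ^ (1 / p) := m4
  have m6 : (1 - ε) * (A2 * V) ^ θ ≤ (A1 ^ 2) ^ θ := by
    have e1 : (A2 * V) ^ θ = A2 ^ θ * V ^ θ := Real.mul_rpow hA2pos.le hV0.le
    have e2 : (A1 ^ 2) ^ θ = A1 ^ (2 * θ) := by
      rw [← Real.rpow_natCast_mul hA1nn 2 θ]; norm_num
    rw [e1, e2]; linarith [m5]
  -- raise to power 2α = 1/θ
  have hθα : θ * (2 * α) = 1 := by rw [hθ_def, hα_def]; field_simp
  have m7 : (1 - ε) ^ (2 * α) * (A2 * V) ≤ A1 ^ 2 := by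
    have step := Real.rpow_le_rpow (by positivity) m6 (by positivity : (0:ℝ) ≤ 2 * α)
    have eL : ((1 - ε) * (A2 * V) ^ θ) ^ (2 * α) =
        (1 - ε) ^ (2 * α) * (A2 * V) := by
      rw [Real.mul_rpow h1e.le (Real.rpow_nonneg (by positivity) _),
        ← Real.rpow_mul (by positivity : (0:ℝ) ≤ A2 * V), hθα, Real.rpow_one]
    have eR : ((A1 ^ 2) ^ θ) ^ (2 * α) = A1 ^ 2 := by
      rw [← Real.rpow_mul (by positivity : (0:ℝ) ≤ A1 ^ 2), hθα, Real.rpow_one]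
    rw [eL, eR] at step
    exact step
  -- conclusion
  have hG2pos : 0 < ((1 / V) * A2) ^ ((1 : ℝ) / 2) :=
    Real.rpow_pos_of_pos (by positivity) _
  have goal2 : ((1 / V) * A2) ^ ((1 : ℝ) / 2) ≤ (1 - ε) ^ (-α) * ((1 / V) * A1) := by
    have hc : 0 < (1 - ε) ^ (2 * α) := Real.rpow_pos_of_pos h1e _
    have hRHSnn : 0 ≤ (1 - ε) ^ (-α) * ((1 / V) * A1) := by
      have := Real.rpow_nonneg h1e.le (-α); positivity
    have hVinv : V * (1 / V) = 1 := by field_simp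
    have hsq : (1 / V) * A2 ≤ ((1 - ε) ^ (-α) * ((1 / V) * A1)) ^ 2 := by
      have e1 : ((1 - ε) ^ (-α)) ^ 2 = ((1 - ε) ^ (2 * α))⁻¹ := by
        rw [← Real.rpow_natCast ((1 - ε) ^ (-α)) 2, ← Real.rpow_mul h1e.le,
          show (-α) * ((2:ℕ):ℝ) = -(2 * α) by push_cast; ring,
          Real.rpow_neg h1e.le]
      have h1 : (1 / V) * A2 ≤ ((1 - ε) ^ (2 * α))⁻¹ * ((1 / V) * A1) ^ 2 := by
        rw [inv_mul_eq_div, le_div_iff₀ hc]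
        have h2 := mul_le_mul_of_nonneg_left m7 (show (0:ℝ) ≤ (1 / V) ^ 2 by positivity)
        calc (1 / V) * A2 * (1 - ε) ^ (2 * α)
            = (1 / V) ^ 2 * ((1 - ε) ^ (2 * α) * (A2 * V)) := by field_simp
          _ ≤ (1 / V) ^ 2 * A1 ^ 2 := h2
          _ = ((1 / V) * A1) ^ 2 := by ring
      calc (1 / V) * A2 ≤ ((1 - ε) ^ (2 * α))⁻¹ * ((1 / V) * A1) ^ 2 := h1
        _ = ((1 - ε) ^ (-α) * ((1 / V) * A1)) ^ 2 := by
            conv_rhs => rw [mul_pow, e1]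
    have h1 : ((1 / V) * A2) ^ ((1:ℝ) / 2) ≤
        (((1 - ε) ^ (-α) * ((1 / V) * A1)) ^ 2) ^ ((1:ℝ) / 2) :=
      Real.rpow_le_rpow (by positivity) hsq (by norm_num)
    have h2 : (((1 - ε) ^ (-α) * ((1 / V) * A1)) ^ 2) ^ ((1:ℝ) / 2) =
        (1 - ε) ^ (-α) * ((1 / V) * A1) := by
      rw [← Real.rpow_natCast ((1 - ε) ^ (-α) * ((1 / V) * A1)) 2,
        ← Real.rpow_mul hRHSnn]
      norm_num
    exact h1.trans_eq h2
  refine ⟨hG2pos, goal2, ?_⟩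
  have hpα : 0 < (1 - ε) ^ α := Real.rpow_pos_of_pos h1e _
  have hstep : (1 - ε) ^ α * (((1 / V) * A2) ^ ((1:ℝ) / 2)) ≤ (1 / V) * A1 := by
    have h1 := mul_le_mul_of_nonneg_left goal2 hpα.le
    calc (1 - ε) ^ α * (((1 / V) * A2) ^ ((1:ℝ) / 2))
        ≤ (1 - ε) ^ α * ((1 - ε) ^ (-α) * ((1 / V) * A1)) := h1
      _ = (1 / V) * A1 := by
          rw [← mul_assoc, ← Real.rpow_add h1e]; simp
  have hdiv : (1 - ε) ^ α ≤ ((1 / V) * A1) / (((1 / V) * A2) ^ ((1:ℝ) / 2)) :=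
    (le_div_iff₀ hG2pos).mpr hstep
  have hb := bern hα hε hε1
  linarith
end

section
/- Let n ≥ 2, 0 ≤ r ≤ n−1, set c(j) := (n−j)·C(n,j), and let κ ∈ ℝⁿ satisfy e_j(κ) > 0 for all 1 ≤ j ≤ r+1. Then (r+1)·c(r+1)·H_{r+2}(κ) − n·c(r)·H_1(κ)·H_{r+1}(κ) ≤ −(r+1)·c(r)·H_{r+1}(κ)^{(r+2)/(r+1)}, with the convention H_{n+1}(κ) := 0. (This pointwise curvature estimate is the key computation in the proof of Theorem 5.1 of the paper on almost r-stable hypersurfaces: it combines H_{r+2} ≤ H₁H_{r+1}, the Maclaurin inequality H₁ ≥ H_{r+1}^{1/(r+1)}, and the identity c(r+1) − n·c(r)/(r+1) = −c(r).) -/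
/-- The `j`-th elementary symmetric polynomial of `κ₁, …, κₙ`.
For `j > n` this is `0`, so that `H_{n+1} = 0` holds by convention. -/
noncomputable def esymmFn (n : ℕ) (κ : Fin n → ℝ) (j : ℕ) : ℝ :=
  ∑ A ∈ Finset.univ.powersetCard j, ∏ i ∈ A, κ i

/-- The `j`-th normalized elementary symmetric function
`H_j(κ) = e_j(κ)/C(n,j)` (the higher order mean curvatures);
note `Hmean n κ (n+1) = 0`, matching the convention `H_{n+1} := 0`. -/
noncomputable def Hmean (n : ℕ) (κ : Fin n → ℝ) (j : ℕ) : ℝ :=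
  esymmFn n κ j / (n.choose j : ℝ)

/-- The normalizing constants `c(j) = (n−j)·C(n,j)`, with `tr(T_j) = c(j)H_j`. -/
noncomputable def cConst (n j : ℕ) : ℝ := ((n - j) * n.choose j : ℕ)

/-!
For every real `κ`, the polynomial `∏ᵢ (X + κᵢ)` has only real roots, hence by Rolle so do
all its derivatives. For a real-rooted polynomial of degree `d` the three lowest coefficients
satisfy `2d p₀ p₂ ≤ (d - 1) p₁²` (induct on `d`, splitting off one root); applied to the `t`-th
derivative, whose lowest coefficients are multiples of `e_{j+2}, e_{j+1}, e_j`, this is Newton's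
inequality `H_j H_{j+2} ≤ H_{j+1}²`. As long as the `H_k` are positive, Newton's inequalities
telescope to `H_{k+1} ≤ H₁ H_k`, which gives both `H_{r+2} ≤ H₁ H_{r+1}` and Maclaurin's
`H_{r+1} ≤ H₁^{r+1}`. Together with `(r+1) c(r+1) - n c(r) = -(r+1) c(r)` these yield the
estimate.
-/

open Polynomial
open scoped Nat

namespace Polynomial

theorem Splits.derivative_of_real {p : ℝ[X]} (hp : p.Splits) : (derivative p).Splits := by
  rw [splits_iff_card_roots] at hp ⊢
  have := p.card_roots_le_derivative
  have := p.natDegree_derivative_le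
  have := (derivative p).card_roots'
  omega

theorem Splits.iterate_derivative_of_real {p : ℝ[X]} (hp : p.Splits) (m : ℕ) :
    (derivative^[m] p).Splits := by
  induction m with
  | zero => exact hp
  | succ m ih => rw [Function.iterate_succ_apply']; exact ih.derivative_of_real

theorem Splits.two_mul_natDegree_mul_coeff_zero_mul_coeff_two_le {p : ℝ[X]} (hp : p.Splits) :
    2 * p.natDegree * p.coeff 0 * p.coeff 2 ≤ (p.natDegree - 1) * p.coeff 1 ^ 2 := by
  induction hd : p.natDegree generalizing p with
  | zero => simp [coeff_eq_zero_of_natDegree_lt, hd]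
  | succ d ih =>
    obtain ⟨a, ha⟩ := Multiset.exists_mem_of_ne_zero (hp.roots_ne_zero (by omega))
    set q := p /ₘ (X - C a)
    have hpq : (X - C a) * q = p := mul_divByMonic_eq_iff_isRoot.mpr (isRoot_of_mem_roots ha)
    have hq : q.natDegree = d := by
      rw [natDegree_divByMonic _ (monic_X_sub_C a), hd, natDegree_X_sub_C]; rfl
    have hqs : q.Splits :=
      hp.of_dvd (ne_zero_of_mem_roots ha) ⟨_, hpq.symm.trans (mul_comm _ _)⟩
    rw [← hpq, coeff_X_sub_C_mul, coeff_X_sub_C_mul, mul_coeff_zero]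
    simp only [coeff_sub, coeff_X_zero, coeff_C_zero, zero_sub, neg_mul]
    push_cast
    rcases Nat.eq_zero_or_pos d with rfl | hdpos
    · simp [coeff_eq_zero_of_natDegree_lt, hq]
    · have IH := ih hqs hq
      have hd1 : (1 : ℝ) ≤ d := by exact_mod_cast hdpos
      -- `d · (RHS − LHS) = (d q₀ + a q₁)² + (d + 1) a² ((d − 1) q₁² − 2d q₀ q₂)`
      nlinarith [sq_nonneg ((d : ℝ) * q.coeff 0 + a * q.coeff 1),
        mul_nonneg (mul_nonneg (by linarith : (0:ℝ) ≤ d + 1) (sq_nonneg a)) (sub_nonneg.mpr IH)]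

end Polynomial

namespace Multiset

theorem esymm_mul_esymm_le (s : Multiset ℝ) {j t : ℕ} (hs : card s = j + 2 + t) :
    ((j : ℝ) + 2) * (t + 2) * (s.esymm (j + 2) * s.esymm j) ≤
      ((j : ℝ) + 1) * (t + 1) * s.esymm (j + 1) ^ 2 := by
  set f := (s.map fun a => X + C a).prod
  set g := derivative^[t] f
  have hg : ∀ k ≤ j + 2, (k ! : ℝ) * g.coeff k = (k + t)! * s.esymm (j + 2 - k) := by
    intro k hk
    have hfac : k ! * (k + t).descFactorial t = (k + t)! := by
      simpa using Nat.factorial_mul_descFactorial (n := k + t) (k := t) (by omega)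
    rw [coeff_iterate_derivative, nsmul_eq_mul, prod_X_add_C_coeff s (by omega), hs,
      ← mul_assoc, ← Nat.cast_mul, hfac]
    congr 2
    omega
  have hgdeg : g.natDegree = j + 2 := by
    refine le_antisymm ((natDegree_iterate_derivative f t).trans ?_)
      (le_natDegree_of_ne_zero ?_)
    · rw [natDegree_multiset_prod_of_monic _ (by simp [monic_X_add_C])]
      simp [hs]
    · intro h
      have hj := hg (j + 2) le_rfl
      rw [h, mul_zero, Nat.sub_self, show s.esymm 0 = 1 by simp [esymm], mul_one] at hj
      exact (j + 2 + t).factorial_ne_zero (by exact_mod_cast hj.symm)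
  have hg0 : g.coeff 0 = t ! * s.esymm (j + 2) := by simpa using hg 0 (by omega)
  have hg1 : g.coeff 1 = (t + 1) * t ! * s.esymm (j + 1) := by
    simpa [add_comm 1 t, Nat.factorial_succ] using hg 1 (by omega)
  have hg2 : 2 * g.coeff 2 = (t + 2) * (t + 1) * t ! * s.esymm j := by
    have := hg 2 (by omega)
    simp only [add_comm 2 t, Nat.factorial_succ] at this
    push_cast at this
    linear_combination this
  have hf : f.Splits := Splits.multisetProd (by simp)
  have key := (hf.iterate_derivative_of_real t).two_mul_natDegree_mul_coeff_zero_mul_coeff_two_le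
  rw [hgdeg] at key
  push_cast at key
  refine le_of_mul_le_mul_left ?_ (by positivity : (0 : ℝ) < (t + 1) * t ! ^ 2)
  calc _ = 2 * ((j : ℝ) + 2) * g.coeff 0 * g.coeff 2 := by
        rw [hg0]; linear_combination (-((j : ℝ) + 2) * t ! * s.esymm (j + 2)) * hg2
    _ ≤ ((j : ℝ) + 2 - 1) * g.coeff 1 ^ 2 := key
    _ = _ := by rw [hg1]; ring

theorem esymm_div_choose_mul_le (s : Multiset ℝ) (j : ℕ) :
    s.esymm j / (card s).choose j * (s.esymm (j + 2) / (card s).choose (j + 2)) ≤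
      (s.esymm (j + 1) / (card s).choose (j + 1)) ^ 2 := by
  obtain ⟨t, ht⟩ | hlt : (∃ t, card s = j + 2 + t) ∨ card s < j + 2 :=
    (le_or_gt (j + 2) (card s)).imp (fun h => ⟨card s - (j + 2), by omega⟩) id
  · have hC : ∀ i ≤ j + 2, (0 : ℝ) < (card s).choose i := fun i hi => by
      exact_mod_cast Nat.choose_pos (by omega)
    have hC₁ : ((card s).choose (j + 1) : ℝ) * (j + 1) = (card s).choose j * (t + 2) := by
      exact_mod_cast (Nat.choose_succ_right_eq _ j).trans
        (by rw [show card s - j = t + 2 by omega])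
    have hC₂ : ((card s).choose (j + 2) : ℝ) * (j + 2) = (card s).choose (j + 1) * (t + 1) := by
      exact_mod_cast (Nat.choose_succ_right_eq _ (j + 1)).trans
        (by rw [show card s - (j + 1) = t + 1 by omega])
    rw [_root_.div_mul_div_comm, div_pow,
      div_le_div_iff₀ (mul_pos (hC j (by omega)) (hC _ le_rfl)) (pow_pos (hC _ (by omega)) 2)]
    refine le_of_mul_le_mul_left ?_ (by positivity : (0 : ℝ) < (j + 1) * (t + 1))
    calc _ = (card s).choose j * (card s).choose (j + 2) *
          (((j : ℝ) + 2) * (t + 2) * (s.esymm (j + 2) * s.esymm j)) := by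
          linear_combination
            (s.esymm j * s.esymm (j + 2) * (t + 1) * (card s).choose (j + 1)) * hC₁ -
              (s.esymm j * s.esymm (j + 2) * (t + 2) * (card s).choose j) * hC₂
      _ ≤ (card s).choose j * (card s).choose (j + 2) *
          (((j : ℝ) + 1) * (t + 1) * s.esymm (j + 1) ^ 2) :=
        mul_le_mul_of_nonneg_left (s.esymm_mul_esymm_le ht) (by positivity)
      _ = _ := by ring
  · rw [Nat.choose_eq_zero_of_lt hlt, Nat.cast_zero, div_zero, mul_zero]
    positivity

end Multiset

theorem esymmFn_eq_esymm (n : ℕ) (κ : Fin n → ℝ) (j : ℕ) :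
    esymmFn n κ j = (Finset.univ.val.map κ).esymm j :=
  (Finset.esymm_map_val κ _ j).symm

theorem Hmean_mul_Hmean_le_sq (n : ℕ) (κ : Fin n → ℝ) (j : ℕ) :
    Hmean n κ j * Hmean n κ (j + 2) ≤ Hmean n κ (j + 1) ^ 2 := by
  simpa [Hmean, esymmFn_eq_esymm] using (Finset.univ.val.map κ).esymm_div_choose_mul_le j

section NewtonSequence

variable {a : ℕ → ℝ} {m : ℕ}

theorem apply_succ_le_mul_of_mul_le_sq (h0 : a 0 = 1)
    (hnewton : ∀ j, a j * a (j + 2) ≤ a (j + 1) ^ 2) (hpos : ∀ k ≤ m, 0 < a k) :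
    ∀ k ≤ m, a (k + 1) ≤ a 1 * a k := by
  intro k hk
  induction k with
  | zero => simp [h0]
  | succ k ih =>
    refine le_of_mul_le_mul_left ?_ (hpos k (by omega))
    calc a k * a (k + 2) ≤ a (k + 1) * a (k + 1) := (hnewton k).trans_eq (sq _)
      _ ≤ a (k + 1) * (a 1 * a k) := mul_le_mul_of_nonneg_left (ih (by omega)) (hpos _ hk).le
      _ = a k * (a 1 * a (k + 1)) := by ring

theorem apply_le_pow_of_mul_le_sq (h0 : a 0 = 1)
    (hnewton : ∀ j, a j * a (j + 2) ≤ a (j + 1) ^ 2) (hpos : ∀ k ≤ m, 0 < a k) :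
    ∀ k ≤ m, a k ≤ a 1 ^ k := by
  intro k hk
  induction k with
  | zero => simp [h0]
  | succ k ih =>
    calc a (k + 1) ≤ a 1 * a k := apply_succ_le_mul_of_mul_le_sq h0 hnewton hpos k (by omega)
      _ ≤ a 1 * a 1 ^ k := mul_le_mul_of_nonneg_left (ih (by omega)) (hpos 1 (by omega)).le
      _ = a 1 ^ (k + 1) := (pow_succ' _ _).symm

end NewtonSequence

theorem Real.rpow_add_two_div_add_one_le_mul {x y : ℝ} {n : ℕ} (hx : 0 ≤ x) (hy : 0 ≤ y)
    (h : x ≤ y ^ (n + 1)) : x ^ (((n : ℝ) + 2) / ((n : ℝ) + 1)) ≤ y * x := by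
  have hn : (0 : ℝ) < n + 1 := by positivity
  have hroot : x ^ ((n : ℝ) + 1)⁻¹ ≤ y := by
    rw [Real.rpow_inv_le_iff_of_pos hx hy hn]
    exact_mod_cast h
  rw [show ((n : ℝ) + 2) / (n + 1) = ((n : ℝ) + 1)⁻¹ + 1 by field_simp; ring,
    Real.rpow_add' hx (by positivity), Real.rpow_one]
  exact mul_le_mul_of_nonneg_right hroot hx

theorem cConst_nonneg (n j : ℕ) : 0 ≤ cConst n j := Nat.cast_nonneg _

theorem add_one_mul_cConst_succ_sub (n r : ℕ) :
    ((r : ℝ) + 1) * cConst n (r + 1) - n * cConst n r = -(((r : ℝ) + 1) * cConst n r) := by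
  obtain ⟨s, rfl⟩ | hnr : (∃ s, n = r + 1 + s) ∨ n ≤ r :=
    (lt_or_ge r n).imp (fun h => ⟨n - (r + 1), by omega⟩) id
  · have hchoose :
        ((r + 1 + s).choose (r + 1) : ℝ) * (r + 1) = (r + 1 + s).choose r * (s + 1) := by
      exact_mod_cast (Nat.choose_succ_right_eq _ r).trans
        (by rw [show r + 1 + s - r = s + 1 by omega])
    rw [cConst, cConst, show r + 1 + s - (r + 1) = s by omega, show r + 1 + s - r = s + 1 by omega]
    push_cast
    linear_combination (s : ℝ) * hchoose
  · simp [cConst, Nat.sub_eq_zero_of_le hnr, Nat.sub_eq_zero_of_le (hnr.trans r.le_succ)]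

theorem stability_curvature_estimate_general (n : ℕ) (r : ℕ)
    (hr : r + 1 ≤ n) (κ : Fin n → ℝ)
    (hpos : ∀ j, 1 ≤ j → j ≤ r + 1 → 0 < esymmFn n κ j) :
    ((r : ℝ) + 1) * cConst n (r + 1) * Hmean n κ (r + 2) -
        (n : ℝ) * cConst n r * Hmean n κ 1 * Hmean n κ (r + 1) ≤
      -(((r : ℝ) + 1) * cConst n r *
        Hmean n κ (r + 1) ^ (((r : ℝ) + 2) / ((r : ℝ) + 1))) := by
  set H := Hmean n κ
  have hH0 : H 0 = 1 := by simp [H, Hmean, esymmFn]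
  have hHpos : ∀ k ≤ r + 1, 0 < H k := by
    intro k hk
    obtain rfl | hk0 := k.eq_zero_or_pos
    · exact hH0 ▸ one_pos
    · exact div_pos (hpos k hk0 hk) (by exact_mod_cast Nat.choose_pos (by omega))
  have hnewton := Hmean_mul_Hmean_le_sq n κ
  have hratio : H (r + 2) ≤ H 1 * H (r + 1) :=
    apply_succ_le_mul_of_mul_le_sq hH0 hnewton hHpos (r + 1) le_rfl
  have hmaclaurin : H (r + 1) ^ (((r : ℝ) + 2) / ((r : ℝ) + 1)) ≤ H 1 * H (r + 1) :=
    Real.rpow_add_two_div_add_one_le_mul (hHpos _ le_rfl).le (hHpos 1 (by omega)).le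
      (apply_le_pow_of_mul_le_sq hH0 hnewton hHpos (r + 1) le_rfl)
  have hc₁ := cConst_nonneg n (r + 1)
  have hc₀ := cConst_nonneg n r
  calc _ ≤ ((r : ℝ) + 1) * cConst n (r + 1) * (H 1 * H (r + 1)) -
          n * cConst n r * H 1 * H (r + 1) := by gcongr
    _ = -(((r : ℝ) + 1) * cConst n r * (H 1 * H (r + 1))) := by
          linear_combination (H 1 * H (r + 1)) * add_one_mul_cConst_succ_sub n r
    _ ≤ _ := by gcongr

/-- The key pointwise curvature estimate in the proof of Theorem 5.1:
`(r+1)c(r+1)H_{r+2} − n c(r) H₁ H_{r+1} ≤ −(r+1)c(r)H_{r+1}^{(r+2)/(r+1)}`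
for `κ` in the Gårding cone `Γ_{r+1}`. -/
theorem stability_curvature_estimate (n : ℕ) (hn : 2 ≤ n) (r : ℕ)
    (hr : r + 1 ≤ n) (κ : Fin n → ℝ)
    (hpos : ∀ j, 1 ≤ j → j ≤ r + 1 → 0 < esymmFn n κ j) :
    ((r : ℝ) + 1) * cConst n (r + 1) * Hmean n κ (r + 2) -
        (n : ℝ) * cConst n r * Hmean n κ 1 * Hmean n κ (r + 1) ≤
      -(((r : ℝ) + 1) * cConst n r *
        Hmean n κ (r + 1) ^ (((r : ℝ) + 2) / ((r : ℝ) + 1))) :=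
  stability_curvature_estimate_general n r hr κ hpos
end

section
/- Assume R is integrable and R̄ > 0. Then ((1/V) ∫_M √R dμ)² ≥ R̄ − (1/√R̄) · ((1/V) ∫_M |R − R̄| dμ) · ((1/V) ∫_M √R dμ + √R̄); in particular, since (1/V)∫_M √R dμ ≤ √R̄ by the Cauchy–Schwarz inequality, ((1/V) ∫_M √R dμ)² ≥ R̄ − 2·(1/V) ∫_M |R − R̄| dμ. (This is the intermediate estimate (6.B) in the proof of Theorem 6.3 of the paper, where R is the scalar curvature and it yields ‖H‖₁² ≥ R̄/(n(n−1)) − c_n‖Ric − (R̄/n)g‖₁.) -/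
open MeasureTheory

/-! Set `s = √R̄` and let `A` be the mean of `√R`. Pointwise `s (s - √R) ≤ R̄ - R ≤ |R - R̄|` when
`√R ≤ s`, and the left side is negative otherwise; averaging gives `s - A ≤ ⨍ |R - R̄| / s`, and
multiplying by `s + A` yields the first estimate. The second follows from `A + s ≤ 2 s` when
`A ≤ s`, and is trivial when `A > s` since then `A² > R̄`. -/

theorem Real.sqrt_sub_sqrt_le_abs_sub_div {r b : ℝ} (hr : 0 ≤ r) (hb : 0 < b) :
    √b - √r ≤ |r - b| / √b := by
  have hs : 0 < √b := Real.sqrt_pos.mpr hb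
  rw [le_div_iff₀ hs]
  rcases le_or_gt √r √b with hle | hlt
  · calc (√b - √r) * √b ≤ (√b - √r) * (√b + √r) := by
          gcongr
          exact le_add_of_nonneg_right (Real.sqrt_nonneg r)
      _ = b - r := by ring_nf; rw [Real.sq_sqrt hb.le, Real.sq_sqrt hr]
      _ ≤ |r - b| := by rw [abs_sub_comm]; exact le_abs_self _
  · exact (mul_neg_of_neg_of_pos (sub_neg.mpr hlt) hs).le.trans (abs_nonneg _)

theorem MeasureTheory.Integrable.sqrt {α : Type*} [MeasurableSpace α] {μ : Measure α}
    [IsFiniteMeasure μ] {f : α → ℝ} (hf : Integrable f μ) (hf0 : 0 ≤ᵐ[μ] f) :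
    Integrable (fun x ↦ √(f x)) μ := by
  refine (hf.add (integrable_const 1)).mono'
    (Real.continuous_sqrt.comp_aestronglyMeasurable hf.aestronglyMeasurable) ?_
  filter_upwards [hf0] with x hx
  rw [Real.norm_of_nonneg (Real.sqrt_nonneg _), Pi.add_apply]
  nlinarith [Real.sq_sqrt hx, Real.sqrt_nonneg (f x)]

theorem sqrt_sub_integral_sqrt_le {α : Type*} [MeasurableSpace α] {μ : Measure α}
    [IsProbabilityMeasure μ] {f : α → ℝ} (hf : Integrable f μ) (hf0 : 0 ≤ᵐ[μ] f) {b : ℝ}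
    (hb : 0 < b) : √b - ∫ x, √(f x) ∂μ ≤ (∫ x, |f x - b| ∂μ) / √b := by
  have hmono : ∫ x, (√b - √(f x)) ∂μ ≤ ∫ x, |f x - b| / √b ∂μ := by
    refine integral_mono_ae ((integrable_const _).sub (hf.sqrt hf0))
      ((hf.sub (integrable_const b)).abs.div_const _) ?_
    filter_upwards [hf0] with x hx
    exact Real.sqrt_sub_sqrt_le_abs_sub_div hx hb
  rwa [integral_sub (integrable_const _) (hf.sqrt hf0), integral_const, probReal_univ, one_smul,
    integral_div] at hmono

theorem sq_ge_of_sqrt_sub_le_div {a b I : ℝ} (ha : 0 ≤ a) (hb : 0 < b) (hI : 0 ≤ I)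
    (h : √b - a ≤ I / √b) :
    a ^ 2 ≥ b - 1 / √b * I * (a + √b) ∧ a ^ 2 ≥ b - 2 * I := by
  have hs : 0 < √b := Real.sqrt_pos.mpr hb
  have hsq : √b ^ 2 = b := Real.sq_sqrt hb.le
  have hfirst : b - a ^ 2 ≤ 1 / √b * I * (a + √b) :=
    calc b - a ^ 2 = (√b - a) * (a + √b) := by nth_rewrite 1 [← hsq]; ring
      _ ≤ I / √b * (a + √b) := by gcongr
      _ = 1 / √b * I * (a + √b) := by ring
  refine ⟨by linarith, ?_⟩
  rcases le_or_gt a √b with hle | hlt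
  · have : 1 / √b * I * (a + √b) ≤ 2 * I :=
      calc 1 / √b * I * (a + √b) ≤ 1 / √b * I * (2 * √b) := by gcongr; linarith
        _ = 2 * I := by field_simp
    linarith
  · nlinarith

theorem sqrt_scalar_curvature_estimate_general
    {M : Type*} [MeasurableSpace M] (μ : Measure M) [IsFiniteMeasure μ]
    (hμ : μ Set.univ ≠ 0) (R : M → ℝ)
    (hR0 : ∀ᵐ x ∂μ, 0 ≤ R x) (hRint : Integrable R μ)
    (V : ℝ) (hV : V = (μ Set.univ).toReal)
    (Rbar : ℝ) (hRbarpos : 0 < Rbar) :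
    ((1 / V) * ∫ x, Real.sqrt (R x) ∂μ) ^ 2 ≥
        Rbar - (1 / Real.sqrt Rbar) * ((1 / V) * ∫ x, |R x - Rbar| ∂μ) *
          ((1 / V) * ∫ x, Real.sqrt (R x) ∂μ + Real.sqrt Rbar) ∧
      ((1 / V) * ∫ x, Real.sqrt (R x) ∂μ) ^ 2 ≥
        Rbar - 2 * ((1 / V) * ∫ x, |R x - Rbar| ∂μ) := by
  have : NeZero μ := ⟨Measure.measure_univ_ne_zero.mp hμ⟩
  set ν := (μ Set.univ)⁻¹ • μ
  have hmean : ∀ f : M → ℝ, (1 / V) * ∫ x, f x ∂μ = ∫ x, f x ∂ν := fun f ↦ by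
    rw [integral_smul_measure, ENNReal.toReal_inv, hV, one_div, smul_eq_mul]
  have hνint : Integrable R ν := hRint.smul_measure (ENNReal.inv_ne_top.mpr hμ)
  have hν0 : 0 ≤ᵐ[ν] R := Measure.ae_smul_measure hR0 _
  simp only [hmean]
  exact sq_ge_of_sqrt_sub_le_div (integral_nonneg fun _ ↦ Real.sqrt_nonneg _) hRbarpos
    (integral_nonneg fun _ ↦ abs_nonneg _) (sqrt_sub_integral_sqrt_le hνint hν0 hRbarpos)

/-- The intermediate estimate (6.B) in the proof of Theorem 6.3:
`((1/V)∫√R)² ≥ R̄ − (1/√R̄)·((1/V)∫|R−R̄|)·((1/V)∫√R + √R̄)`, and in particular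
`((1/V)∫√R)² ≥ R̄ − 2·(1/V)∫|R−R̄|`. -/
theorem sqrt_scalar_curvature_estimate
    {M : Type*} [MeasurableSpace M] (μ : Measure M) [IsFiniteMeasure μ]
    (hμ : μ Set.univ ≠ 0) (R : M → ℝ) (hRm : Measurable R)
    (hR0 : ∀ᵐ x ∂μ, 0 ≤ R x) (hRint : Integrable R μ)
    (V : ℝ) (hV : V = (μ Set.univ).toReal)
    (Rbar : ℝ) (hRbar : Rbar = (1 / V) * ∫ x, R x ∂μ) (hRbarpos : 0 < Rbar) :
    ((1 / V) * ∫ x, Real.sqrt (R x) ∂μ) ^ 2 ≥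
        Rbar - (1 / Real.sqrt Rbar) * ((1 / V) * ∫ x, |R x - Rbar| ∂μ) *
          ((1 / V) * ∫ x, Real.sqrt (R x) ∂μ + Real.sqrt Rbar) ∧
      ((1 / V) * ∫ x, Real.sqrt (R x) ∂μ) ^ 2 ≥
        Rbar - 2 * ((1 / V) * ∫ x, |R x - Rbar| ∂μ) :=
  sqrt_scalar_curvature_estimate_general μ hμ R hR0 hRint V hV Rbar hRbarpos
end
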